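/- (Lemma 4.1.) Let P ≥ 0 and define g₁ : ℝ → ℝ by g₁(A) = 1 − (1/2 + (1/2)·erf(√(A/2) + √(P/2)))². Then g₁ is monotonically decreasing on [0, ∞) (AntitoneOn g₁ (Set.Ici 0)) and convex on [0, ∞) (ConvexOn ℝ (Set.Ici 0) g₁). -/

import Mathlib

/-!
Write `Φ x = 1/2 + erf x / 2`, `c = √(P/2)` and `s = √(A/2)`. Monotonicity is that of `erf`.
The derivative of `g₁` is `-Φ(s+c) Φ'(s+c) / (2s)`, so `g₁` is convex as soon as
`s ↦ Φ(s+c) Φ'(s+c) / s` decreases on `s > 0`. Since `Φ'' x = -2x Φ' x`, the derivative of this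
quotient has the sign of `s Φ'(s+c) - Φ(s+c) (2(s+c)s + 1)`, which is negative because
`Φ' ≤ 1/√π < 1`, `Φ ≥ 1/2` on `[0, ∞)` and `2s² + 1 ≥ 2s`.
-/

open MeasureTheory ProbabilityTheory Real Set

noncomputable def erf (x : ℝ) : ℝ :=
  (2 / Real.sqrt Real.pi) * ∫ t in (0:ℝ)..x, Real.exp (-t^2)

theorem hasDerivAt_erf (x : ℝ) : HasDerivAt erf (2 / √π * exp (-x ^ 2)) x := by
  have hc : Continuous fun t : ℝ => exp (-t ^ 2) := by fun_prop
  exact (intervalIntegral.integral_hasDerivAt_right (hc.intervalIntegrable _ _)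
    (hc.stronglyMeasurableAtFilter _ _) hc.continuousAt).const_mul _

theorem monotone_erf : Monotone erf :=
  monotone_of_deriv_nonneg (fun x => (hasDerivAt_erf x).differentiableAt) fun x => by
    rw [(hasDerivAt_erf x).deriv]; positivity

theorem erf_nonneg {x : ℝ} (hx : 0 ≤ x) : 0 ≤ erf x := by
  simpa [erf] using monotone_erf hx

/-- The distribution function of a centred Gaussian of variance `1/2`. -/
noncomputable def gaussCDF (x : ℝ) : ℝ := 1 / 2 + 1 / 2 * erf x

noncomputable def gaussPDF (x : ℝ) : ℝ := exp (-x ^ 2) / √π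

theorem hasDerivAt_gaussCDF (x : ℝ) : HasDerivAt gaussCDF (gaussPDF x) x := by
  refine (((hasDerivAt_erf x).const_mul (1 / 2)).const_add (1 / 2)).congr_deriv ?_
  unfold gaussPDF; field_simp

theorem hasDerivAt_gaussPDF (x : ℝ) : HasDerivAt gaussPDF (-2 * x * gaussPDF x) x := by
  refine ((((hasDerivAt_pow 2 x).neg).exp).div_const √π).congr_deriv ?_
  unfold gaussPDF; simp only [Pi.neg_apply, Nat.cast_ofNat]; ring

theorem monotone_gaussCDF : Monotone gaussCDF := fun _ _ h => by
  simp only [gaussCDF]; linarith [monotone_erf h]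

theorem one_half_le_gaussCDF {x : ℝ} (hx : 0 ≤ x) : 1 / 2 ≤ gaussCDF x := by
  simp only [gaussCDF]; linarith [erf_nonneg hx]

theorem gaussPDF_pos (x : ℝ) : 0 < gaussPDF x := by
  unfold gaussPDF; positivity

theorem gaussPDF_le_one (x : ℝ) : gaussPDF x ≤ 1 := by
  have hexp : exp (-x ^ 2) ≤ 1 := exp_le_one_iff.mpr (by nlinarith)
  have hpi : 1 ≤ √π := one_le_sqrt.mpr (by linarith [pi_gt_three])
  exact (div_le_one (by linarith)).mpr (hexp.trans hpi)

theorem convexOn_comp_sqrt {H H' : ℝ → ℝ} (hcont : ContinuousOn H (Ici 0))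
    (hderiv : ∀ s > 0, HasDerivAt H (H' s) s) (hmono : MonotoneOn (fun s => H' s / s) (Ioi 0)) :
    ConvexOn ℝ (Ici 0) fun A => H √A := by
  have hd : ∀ A > 0, HasDerivAt (fun A => H √A) (H' √A / (2 * √A)) A := fun A hA =>
    ((hderiv _ (sqrt_pos.mpr hA)).comp A (hasDerivAt_sqrt hA.ne')).congr_deriv (by ring)
  refine MonotoneOn.convexOn_of_deriv (convex_Ici 0)
    (hcont.comp continuous_sqrt.continuousOn fun A _ => sqrt_nonneg A) ?_ ?_ <;> rw [interior_Ici]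
  · exact fun A hA => (hd A hA).differentiableAt.differentiableWithinAt
  · intro A hA B hB hAB
    rw [(hd A hA).deriv, (hd B hB).deriv, div_mul_eq_div_div_swap, div_mul_eq_div_div_swap]
    exact div_le_div_of_nonneg_right
      (hmono (sqrt_pos.mpr hA) (sqrt_pos.mpr hB) (sqrt_le_sqrt hAB)) zero_le_two

theorem convexOn_comp_sqrt_div_two {H H' : ℝ → ℝ} (hcont : ContinuousOn H (Ici 0))
    (hderiv : ∀ s > 0, HasDerivAt H (H' s) s) (hmono : MonotoneOn (fun s => H' s / s) (Ioi 0)) :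
    ConvexOn ℝ (Ici 0) fun A => H √(A / 2) := by
  have h := (convexOn_comp_sqrt hcont hderiv hmono).comp_linearMap ((2⁻¹ : ℝ) • LinearMap.id)
  have hpre : ((2⁻¹ : ℝ) • LinearMap.id : ℝ →ₗ[ℝ] ℝ) ⁻¹' Ici 0 = Ici 0 := by ext; simp
  rw [hpre] at h
  exact h.congr fun A _ => by simp [div_eq_inv_mul]

theorem antitoneOn_gaussCDF_mul_gaussPDF_div {c : ℝ} (hc : 0 ≤ c) :
    AntitoneOn (fun s => gaussCDF (s + c) * gaussPDF (s + c) / s) (Ioi 0) := by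
  have hd : ∀ s > 0, HasDerivAt (fun s => gaussCDF (s + c) * gaussPDF (s + c) / s)
      (gaussPDF (s + c) / s ^ 2 *
        (s * gaussPDF (s + c) - gaussCDF (s + c) * (2 * (s + c) * s + 1))) s := fun s hs =>
    ((((hasDerivAt_gaussCDF (s + c)).comp_add_const s c).mul
      ((hasDerivAt_gaussPDF (s + c)).comp_add_const s c)).div (hasDerivAt_id s)
      hs.ne').congr_deriv (by simp only [id, Pi.mul_apply]; field_simp; ring)
  refine antitoneOn_of_deriv_nonpos (convex_Ioi 0)
    (fun s hs => (hd s hs).continuousAt.continuousWithinAt) ?_ ?_ <;> rw [interior_Ioi]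
  · exact fun s hs => (hd s hs).differentiableAt.differentiableWithinAt
  · intro s hs
    have hs : 0 < s := hs
    rw [(hd s hs).deriv]
    have hF := one_half_le_gaussCDF (add_nonneg hs.le hc)
    have hf := gaussPDF_le_one (s + c)
    refine mul_nonpos_of_nonneg_of_nonpos (div_nonneg (gaussPDF_pos _).le (sq_nonneg s)) ?_
    have hsf : s * gaussPDF (s + c) ≤ s := mul_le_of_le_one_right hs.le hf
    have hF' : 1 / 2 * (2 * s ^ 2 + 1) ≤ gaussCDF (s + c) * (2 * (s + c) * s + 1) :=
      mul_le_mul hF (by nlinarith) (by positivity) (by linarith)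
    nlinarith [sq_nonneg (s - 1 / 2)]

theorem antitone_one_sub_gaussCDF_sq {c : ℝ} (hc : 0 ≤ c) :
    Antitone fun A => 1 - gaussCDF (√(A / 2) + c) ^ 2 := fun a b hab => by
  have hle : gaussCDF (√(a / 2) + c) ≤ gaussCDF (√(b / 2) + c) :=
    monotone_gaussCDF (by gcongr)
  have h0 : 0 ≤ gaussCDF (√(a / 2) + c) :=
    le_trans (by norm_num) (one_half_le_gaussCDF (add_nonneg (sqrt_nonneg _) hc))
  linarith [pow_le_pow_left₀ h0 hle 2]

theorem convexOn_one_sub_gaussCDF_sq {c : ℝ} (hc : 0 ≤ c) :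
    ConvexOn ℝ (Ici 0) fun A => 1 - gaussCDF (√(A / 2) + c) ^ 2 := by
  refine convexOn_comp_sqrt_div_two (H := fun s => 1 - gaussCDF (s + c) ^ 2)
    (H' := fun s => -2 * (gaussCDF (s + c) * gaussPDF (s + c))) ?_ ?_ ?_
  · have : Continuous gaussCDF := continuous_iff_continuousAt.mpr fun x =>
      (hasDerivAt_gaussCDF x).continuousAt
    fun_prop
  · intro s _
    exact ((((hasDerivAt_gaussCDF (s + c)).comp_add_const s c).pow 2).const_sub 1).congr_deriv
      (by simp only [Nat.cast_ofNat]; ring)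
  · intro a ha b hb hab
    have := antitoneOn_gaussCDF_mul_gaussPDF_div hc ha hb hab
    simp only [mul_div_assoc] at this ⊢
    linarith

theorem stmt_14_general (P : ℝ)
    (g₁ : ℝ → ℝ)
    (hg₁ : ∀ A, g₁ A = 1 - (1/2 + (1/2) * erf (Real.sqrt (A/2) + Real.sqrt (P/2)))^2) :
    AntitoneOn g₁ (Set.Ici 0) ∧ ConvexOn ℝ (Set.Ici 0) g₁ := by
  obtain rfl : g₁ = fun A => 1 - gaussCDF (√(A / 2) + √(P / 2)) ^ 2 := funext hg₁
  exact ⟨(antitone_one_sub_gaussCDF_sq (sqrt_nonneg _)).antitoneOn _,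
    convexOn_one_sub_gaussCDF_sq (sqrt_nonneg _)⟩

theorem stmt_14 (P : ℝ) (hP : 0 ≤ P)
    (g₁ : ℝ → ℝ)
    (hg₁ : ∀ A, g₁ A = 1 - (1/2 + (1/2) * erf (Real.sqrt (A/2) + Real.sqrt (P/2)))^2) :
    AntitoneOn g₁ (Set.Ici 0) ∧ ConvexOn ℝ (Set.Ici 0) g₁ :=
  stmt_14_general P g₁ hg₁
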